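/- arXiv:2401.11758 — 9 statements merged into one kernel-verified Lean document; each statement's English description precedes it below -/
import Mathlib

section
/- Let H and S be Hermitian n×n complex matrices with H·S = S·H and S² = 1, let φ₀ ∈ ℂⁿ be a unit vector, and set S₀ := Re⟨φ₀, S·φ₀⟩. For real t and x, define the noiseless state φ := exp(-i·t·H)·φ₀ and the noisy state ψ := exp(-i·t·H)·exp(-i·x·S)·φ₀. Then the fidelity satisfies |⟨φ, ψ⟩|² = cos²(x) + S₀² · sin²(x). -/
open Matrix

open NormedSpace in
set_option maxHeartbeats 1000000 in
theorem exp_smul_sq_one {n : ℕ} (S : Matrix (Fin n) (Fin n) ℂ) (hS2 : S ^ 2 = 1) (x : ℝ) :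
    exp ((-(Complex.I * (x : ℂ))) • S)
      = (Complex.cos x) • (1 : Matrix (Fin n) (Fin n) ℂ) - (Complex.sin x * Complex.I) • S := by
  set c : ℂ := -(Complex.I * (x : ℂ)) with hc
  have hc2 : c ^ 2 = -((x : ℂ) ^ 2) := by
    rw [hc, neg_pow, mul_pow, Complex.I_sq]; ring
  have heven : ∀ k : ℕ, ((Nat.factorial (2 * k) : ℂ)⁻¹) • (c • S) ^ (2 * k)
      = ((-1) ^ k * (x : ℂ) ^ (2 * k) / (Nat.factorial (2 * k) : ℂ)) •
        (1 : Matrix (Fin n) (Fin n) ℂ) := by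
    intro k
    rw [smul_pow, pow_mul, pow_mul, hc2, hS2, one_pow, smul_smul]
    congr 1
    rw [neg_pow, ← pow_mul]
    ring
  have hodd : ∀ k : ℕ, ((Nat.factorial (2 * k + 1) : ℂ)⁻¹) • (c • S) ^ (2 * k + 1)
      = ((-Complex.I) * ((-1) ^ k * (x : ℂ) ^ (2 * k + 1) / (Nat.factorial (2 * k + 1) : ℂ))) • S := by
    intro k
    rw [smul_pow, pow_succ c, pow_succ S, pow_mul c, pow_mul S, hc2, hS2, one_pow, one_mul,
      smul_smul]
    congr 1
    rw [neg_pow, ← pow_mul, hc]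
    ring
  have he : HasSum (fun k : ℕ => ((Nat.factorial (2 * k) : ℂ)⁻¹) • (c • S) ^ (2 * k))
      ((Complex.cos x) • (1 : Matrix (Fin n) (Fin n) ℂ)) := by
    have h1 := (Complex.hasSum_cos (x : ℂ)).smul_const (1 : Matrix (Fin n) (Fin n) ℂ)
    simpa only [heven] using h1
  have ho : HasSum (fun k : ℕ => ((Nat.factorial (2 * k + 1) : ℂ)⁻¹) • (c • S) ^ (2 * k + 1))
      (((-Complex.I) * Complex.sin x) • S) := by
    have h1 := ((Complex.hasSum_sin (x : ℂ)).mul_left (-Complex.I)).smul_const S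
    simpa only [hodd] using h1
  have hsum := HasSum.even_add_odd (f := fun m : ℕ => ((Nat.factorial m : ℂ)⁻¹) • (c • S) ^ m) he ho
  rw [exp_eq_tsum (𝕂 := ℂ)]
  beta_reduce
  rw [hsum.tsum_eq]
  rw [sub_eq_add_neg]
  congr 1
  rw [← neg_smul]
  congr 1
  ring

theorem exp_unitary_herm {n : ℕ} (H : Matrix (Fin n) (Fin n) ℂ) (hH : H.IsHermitian) (t : ℝ) :
    (NormedSpace.exp ((-(Complex.I * (t : ℂ))) • H))ᴴ *
      NormedSpace.exp ((-(Complex.I * (t : ℂ))) • H) = 1 := by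
  rw [← Matrix.exp_conjTranspose]
  have h1 : ((-(Complex.I * (t : ℂ))) • H)ᴴ = (Complex.I * (t : ℂ)) • H := by
    rw [conjTranspose_smul, hH.eq]
    congr 1
    simp [Complex.ext_iff]
  rw [h1, ← Matrix.exp_add_of_commute]
  · rw [← add_smul]
    simp
  · exact (Commute.refl H).smul_left _ |>.smul_right _

theorem pauli_noise_fidelity (n : ℕ) (hn : 1 ≤ n)
    (H S : Matrix (Fin n) (Fin n) ℂ)
    (hH : H.IsHermitian) (hS : S.IsHermitian)
    (hcomm : H * S = S * H) (hS2 : S ^ 2 = 1)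
    (φ₀ : Fin n → ℂ) (hφ₀ : star φ₀ ⬝ᵥ φ₀ = 1)
    (t x : ℝ)
    (S₀ : ℝ) (hS₀ : S₀ = (star φ₀ ⬝ᵥ S.mulVec φ₀).re)
    (φ ψ : Fin n → ℂ)
    (hφ : φ = (NormedSpace.exp ((-(Complex.I * (t : ℂ))) • H)).mulVec φ₀)
    (hψ : ψ = (NormedSpace.exp ((-(Complex.I * (t : ℂ))) • H)).mulVec
      ((NormedSpace.exp ((-(Complex.I * (x : ℂ))) • S)).mulVec φ₀)) :
    ‖star φ ⬝ᵥ ψ‖ ^ 2 = Real.cos x ^ 2 + S₀ ^ 2 * Real.sin x ^ 2 := by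
  set U := NormedSpace.exp ((-(Complex.I * (t : ℂ))) • H) with hU
  set w := (NormedSpace.exp ((-(Complex.I * (x : ℂ))) • S)).mulVec φ₀ with hw
  set z := star φ₀ ⬝ᵥ S.mulVec φ₀ with hz
  -- z is real
  have h1 : star z = z := by
    conv_lhs => rw [hz, star_dotProduct, star_star, star_mulVec, hS.eq,
      ← Matrix.dotProduct_mulVec]
  have hzr : z = (S₀ : ℂ) := by
    rw [hS₀]
    exact (Complex.conj_eq_iff_re.mp h1).symm
  have hUU : Uᴴ * U = 1 := by rw [hU]; exact exp_unitary_herm H hH t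
  -- inner product
  have key : star φ ⬝ᵥ ψ = (Real.cos x : ℂ) - (Real.sin x : ℂ) * Complex.I * (S₀ : ℂ) := by
    rw [hφ, hψ, star_mulVec, Matrix.dotProduct_mulVec, vecMul_vecMul, hUU, vecMul_one,
      hw, exp_smul_sq_one S hS2 x, sub_mulVec, smul_mulVec, smul_mulVec,
      one_mulVec, dotProduct_sub, dotProduct_smul, dotProduct_smul, hφ₀, ← hz, hzr]
    simp only [smul_eq_mul, mul_one, Complex.ofReal_cos, Complex.ofReal_sin]
  rw [key, Complex.sq_norm, Complex.normSq_apply]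
  simp [Complex.cos_ofReal_re, Complex.sin_ofReal_re]
  ring
end

section
/- Let P be a Hermitian n×n complex matrix with P² = P, let φ₀ ∈ ℂⁿ be a unit vector, and set p := Re⟨φ₀, P·φ₀⟩. Then for every real x, the fidelity satisfies |⟨φ₀, exp(-i·x·P)·φ₀⟩|² = 1 - 2·p·(1-p)·(1 - cos x). -/
open Matrix

attribute [local instance] Matrix.linftyOpNormedAddCommGroup Matrix.linftyOpNormedRing
  Matrix.linftyOpNormedAlgebra

set_option maxHeartbeats 1000000 in
lemma exp_smul_idem (n : ℕ) (P : Matrix (Fin n) (Fin n) ℂ) (hP2 : P ^ 2 = P) (c : ℂ) :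
    NormedSpace.exp (c • P) = 1 + (NormedSpace.exp c - 1) • P := by
  have hPk : ∀ k : ℕ, P ^ (k + 1) = P := by
    intro k
    induction k with
    | zero => simp
    | succ m ih => rw [pow_succ, ih, ← pow_two, hP2]
  have hsum : Summable (fun k : ℕ => ((Nat.factorial k : ℂ))⁻¹ • (c • P) ^ k) :=
    NormedSpace.expSeries_summable' (c • P)
  have hcs : Summable (fun k : ℕ => ((Nat.factorial k : ℂ))⁻¹ • c ^ k) :=
    NormedSpace.expSeries_summable' c
  have hcs1 : Summable (fun k : ℕ => ((Nat.factorial (k + 1) : ℂ))⁻¹ • c ^ (k + 1)) :=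
    (summable_nat_add_iff 1).mpr hcs
  rw [NormedSpace.exp_eq_tsum ℂ]
  beta_reduce
  rw [Summable.tsum_eq_zero_add hsum]
  have h1 : ∀ k : ℕ, ((Nat.factorial (k + 1) : ℂ))⁻¹ • (c • P) ^ (k + 1)
      = (((Nat.factorial (k + 1) : ℂ))⁻¹ • c ^ (k + 1)) • P := by
    intro k
    rw [smul_pow, hPk, smul_smul, smul_eq_mul]
  simp only [h1]
  rw [Summable.tsum_smul_const hcs1]
  have h2 : (∑' k : ℕ, ((Nat.factorial (k + 1) : ℂ))⁻¹ • c ^ (k + 1)) = NormedSpace.exp c - 1 := by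
    rw [NormedSpace.exp_eq_tsum ℂ]
    beta_reduce
    rw [Summable.tsum_eq_zero_add hcs]
    simp
  rw [h2]
  simp

theorem projection_noise_fidelity (n : ℕ) (hn : 1 ≤ n)
    (P : Matrix (Fin n) (Fin n) ℂ)
    (hP : P.IsHermitian) (hP2 : P ^ 2 = P)
    (φ₀ : Fin n → ℂ) (hφ₀ : star φ₀ ⬝ᵥ φ₀ = 1)
    (p : ℝ) (hp : p = (star φ₀ ⬝ᵥ P.mulVec φ₀).re)
    (x : ℝ) :
    ‖star φ₀ ⬝ᵥ
        (NormedSpace.exp ((-(Complex.I * (x : ℂ))) • P)).mulVec φ₀‖ ^ 2 =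
      1 - 2 * p * (1 - p) * (1 - Real.cos x) := by
  set c : ℂ := -(Complex.I * (x : ℂ)) with hc
  -- the quadratic form is real
  have hq : (star φ₀ ⬝ᵥ P.mulVec φ₀) = (p : ℂ) := by
    have hstar : (starRingEnd ℂ) (star φ₀ ⬝ᵥ P.mulVec φ₀) = star φ₀ ⬝ᵥ P.mulVec φ₀ := by
      have h1 : star (star φ₀ ⬝ᵥ P.mulVec φ₀) = star (P.mulVec φ₀) ⬝ᵥ φ₀ := by
        rw [star_dotProduct, star_star]
      rw [show (starRingEnd ℂ) (star φ₀ ⬝ᵥ P.mulVec φ₀) = star (star φ₀ ⬝ᵥ P.mulVec φ₀) from rfl,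
        h1, star_mulVec, hP.eq, ← dotProduct_mulVec]
    have him : (star φ₀ ⬝ᵥ P.mulVec φ₀).im = 0 := by
      have := congrArg Complex.im hstar
      simp [Complex.conj_im] at this
      linarith
    apply Complex.ext <;> simp [hp, him]
  rw [exp_smul_idem n P hP2 c, Matrix.add_mulVec, Matrix.one_mulVec,
    Matrix.smul_mulVec, dotProduct_add, dotProduct_smul, hφ₀, hq, smul_eq_mul]
  have hce : NormedSpace.exp c = Complex.exp (((-x : ℝ) : ℂ) * Complex.I) := by
    rw [← Complex.exp_eq_exp_ℂ]
    congr 1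
    push_cast
    ring
  rw [hce]
  rw [Complex.sq_norm, Complex.normSq_apply]
  simp only [Complex.add_re, Complex.add_im, Complex.one_re, Complex.one_im, Complex.mul_re,
    Complex.mul_im, Complex.sub_re, Complex.sub_im, Complex.ofReal_re, Complex.ofReal_im,
    Complex.exp_ofReal_mul_I_re, Complex.exp_ofReal_mul_I_im, Real.cos_neg, Real.sin_neg]
  linear_combination (p ^ 2) * (Real.sin_sq_add_cos_sq x)
end

section
/- Let k > 0, γ > 0, t ≥ 0, set τ := exp(-k·t)·sinh(k·t)/k, and let μ := gaussianReal 0 (γ²·τ). Then for every real S₀, ∫ (cos²(x) + S₀²·sin²(x)) dμ(x) = (1/2)·(1 + S₀²) + (1/2)·(1 - S₀²)·exp(-2·γ²·τ). -/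
open ProbabilityTheory MeasureTheory
open scoped NNReal

/-!
Since cos² x + c sin² x = (1 + c)/2 + (1 - c)/2 · cos 2x, only the Gaussian mean of cos 2x is
needed, and that is the real part of the characteristic function at 2, namely exp (-2v).
-/

lemma re_charFun_eq_integral_cos {μ : Measure ℝ} [IsFiniteMeasure μ] (t : ℝ) :
    (charFun μ t).re = ∫ x, Real.cos (t * x) ∂μ := by
  have hint : Integrable (fun x : ℝ ↦ Complex.exp (↑(t * x) * Complex.I)) μ :=
    (integrable_const (1 : ℝ)).mono' (by fun_prop)
      (ae_of_all _ fun x ↦ (Complex.norm_exp_ofReal_mul_I _).le)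
  rw [charFun_apply_real, ← RCLike.re_eq_complex_re, ← integral_re (by exact_mod_cast hint)]
  simp_rw [RCLike.re_eq_complex_re, ← Complex.ofReal_mul, Complex.exp_ofReal_mul_I_re]

lemma integral_cos_mul_gaussianReal (m : ℝ) (v : ℝ≥0) (t : ℝ) :
    ∫ x, Real.cos (t * x) ∂gaussianReal m v = Real.cos (t * m) * Real.exp (-(v * t ^ 2 / 2)) := by
  rw [← re_charFun_eq_integral_cos, charFun_gaussianReal, Complex.exp_re]
  simp only [← Complex.ofReal_pow, Complex.sub_re, Complex.mul_re, Complex.ofReal_re,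
    Complex.ofReal_im, mul_zero, sub_zero, Complex.I_re, Complex.mul_im, zero_mul, add_zero,
    Complex.I_im, mul_one, sub_self, Complex.div_ofNat_re, zero_sub, Complex.sub_im,
    Complex.div_ofNat_im, zero_div]
  ring

lemma integral_cos_sq_add_mul_sin_sq {μ : Measure ℝ} [IsProbabilityMeasure μ] (c : ℝ) :
    ∫ x, (Real.cos x ^ 2 + c * Real.sin x ^ 2) ∂μ =
      (1 + c) / 2 + (1 - c) / 2 * ∫ x, Real.cos (2 * x) ∂μ := by
  have hcos : Integrable (fun x ↦ Real.cos (2 * x)) μ :=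
    (integrable_const (1 : ℝ)).mono' (by fun_prop)
      (ae_of_all _ fun x ↦ by simpa using Real.abs_cos_le_one (2 * x))
  have hpt : ∀ x, Real.cos x ^ 2 + c * Real.sin x ^ 2 =
      (1 + c) / 2 + (1 - c) / 2 * Real.cos (2 * x) := by
    intro x
    rw [Real.cos_sq, Real.sin_sq, Real.cos_sq]
    ring
  simp_rw [hpt]
  rw [integral_add (integrable_const _) (hcos.const_mul _), integral_const_mul]
  simp

theorem pauli_fidelity_mean_OU_calibrated_general (k γ t : ℝ) (hk : 0 < k)
    (ht : 0 ≤ t)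
    (τ : ℝ) (hτ : τ = Real.exp (-k * t) * Real.sinh (k * t) / k)
    (μ : Measure ℝ) (hμ : μ = gaussianReal 0 (Real.toNNReal (γ ^ 2 * τ)))
    (S₀ : ℝ) :
    ∫ x, (Real.cos x ^ 2 + S₀ ^ 2 * Real.sin x ^ 2) ∂μ =
      (1 / 2) * (1 + S₀ ^ 2) + (1 / 2) * (1 - S₀ ^ 2) * Real.exp (-2 * γ ^ 2 * τ) := by
  have hτ_nonneg : 0 ≤ τ := by
    have hsinh : 0 ≤ Real.sinh (k * t) := Real.sinh_nonneg_iff.mpr (by positivity)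
    rw [hτ]
    positivity
  rw [hμ, integral_cos_sq_add_mul_sin_sq, integral_cos_mul_gaussianReal,
    Real.coe_toNNReal _ (by positivity), mul_zero, Real.cos_zero]
  ring_nf

theorem pauli_fidelity_mean_OU_calibrated (k γ t : ℝ) (hk : 0 < k) (hγ : 0 < γ)
    (ht : 0 ≤ t)
    (τ : ℝ) (hτ : τ = Real.exp (-k * t) * Real.sinh (k * t) / k)
    (μ : Measure ℝ) (hμ : μ = gaussianReal 0 (Real.toNNReal (γ ^ 2 * τ)))
    (S₀ : ℝ) :
    ∫ x, (Real.cos x ^ 2 + S₀ ^ 2 * Real.sin x ^ 2) ∂μ =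
      (1 / 2) * (1 + S₀ ^ 2) + (1 / 2) * (1 - S₀ ^ 2) * Real.exp (-2 * γ ^ 2 * τ) :=
  pauli_fidelity_mean_OU_calibrated_general k γ t hk ht τ hτ μ hμ S₀
end

section
/- Let k > 0, γ > 0, t ≥ 0, set τ := exp(-k·t)·sinh(k·t)/k, and let μ := gaussianReal 0 (γ²·τ). Then for every real S₀, the variance of the function x ↦ cos²(x) + S₀²·sin²(x) with respect to μ equals (1/8)·(1 - S₀²)²·(1 - exp(-4·γ²·τ))², i.e. ∫ (cos²(x) + S₀²·sin²(x))² dμ(x) - (∫ (cos²(x) + S₀²·sin²(x)) dμ(x))² = (1/8)·(1 - S₀²)²·(1 - exp(-4·γ²·τ))². -/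
open ProbabilityTheory MeasureTheory Real
open scoped NNReal ENNReal

/-!
Since cos² x + c sin² x = (1 + c)/2 + (1 - c)/2 · cos 2x, the variance is ((1 - c)/2)² Var[cos 2X].
For X ~ N(0, v) the characteristic function gives E[cos aX] = exp(-v a²/2), and together with
cos² = (1 + cos 2·)/2 this yields Var[cos aX] = (1 - exp(-v a²))²/2; at a = 2, v = γ²τ this is the
claimed formula.
-/

lemma cos_sq_add_mul_sin_sq (c x : ℝ) :
    cos x ^ 2 + c * sin x ^ 2 = (1 + c) / 2 + (1 - c) / 2 * cos (2 * x) := by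
  rw [cos_sq, sin_sq, cos_sq]
  ring

lemma memLp_cos_const_mul {μ : Measure ℝ} [IsFiniteMeasure μ] (p : ℝ≥0∞) (a : ℝ) :
    MemLp (fun x ↦ cos (a * x)) p μ :=
  MemLp.of_bound (by fun_prop) 1 (.of_forall fun x ↦ by simpa using abs_cos_le_one (a * x))

lemma integral_cos_const_mul_gaussianReal (m : ℝ) (v : ℝ≥0) (a : ℝ) :
    ∫ x, cos (a * x) ∂gaussianReal m v = cos (a * m) * exp (-(v * a ^ 2 / 2)) := by
  have hint : Integrable (fun x : ℝ ↦ Complex.exp (a * x * Complex.I)) (gaussianReal m v) :=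
    (integrable_const (1 : ℝ)).mono' (by fun_prop)
      (.of_forall fun x ↦ by rw [← Complex.ofReal_mul, Complex.norm_exp_ofReal_mul_I])
  calc ∫ x, cos (a * x) ∂gaussianReal m v
      = ∫ x, (Complex.exp (a * x * Complex.I)).re ∂gaussianReal m v := by
        simp only [← Complex.ofReal_mul, Complex.exp_ofReal_mul_I_re]
    _ = (charFun (gaussianReal m v) a).re := by
        rw [charFun_apply_real]
        exact integral_re hint
    _ = cos (a * m) * exp (-(v * a ^ 2 / 2)) := by
        rw [charFun_gaussianReal, show (a : ℂ) * m * Complex.I - v * a ^ 2 / 2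
            = ((-(v * a ^ 2 / 2) : ℝ) : ℂ) + (a * m : ℝ) * Complex.I by push_cast; ring,
          Complex.exp_add, ← Complex.ofReal_exp, Complex.re_ofReal_mul,
          Complex.exp_ofReal_mul_I_re, mul_comm]

lemma variance_cos_const_mul_gaussianReal (v : ℝ≥0) (a : ℝ) :
    Var[fun x ↦ cos (a * x); gaussianReal 0 v] = (1 - exp (-(v * a ^ 2))) ^ 2 / 2 := by
  have hsq : (fun x ↦ cos (a * x)) ^ 2 = fun x ↦ 1 / 2 + 1 / 2 * cos (2 * a * x) := by
    ext x
    rw [Pi.pow_apply, cos_sq, mul_assoc]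
    ring
  have hexp : exp (-(v * a ^ 2 / 2)) ^ 2 = exp (-(v * a ^ 2)) := by
    rw [← exp_nat_mul]
    congr 1
    push_cast
    ring
  have hexp' : exp (-(v * (2 * a) ^ 2 / 2)) = exp (-(v * a ^ 2)) ^ 2 := by
    rw [← exp_nat_mul]
    congr 1
    push_cast
    ring
  rw [variance_eq_sub (memLp_cos_const_mul 2 a), hsq,
    integral_add (integrable_const _) ((memLp_cos_const_mul 1 _).integrable le_rfl |>.const_mul _),
    integral_const_mul, integral_const, integral_cos_const_mul_gaussianReal,
    integral_cos_const_mul_gaussianReal, hexp']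
  simp only [mul_zero, cos_zero, one_mul, probReal_univ, smul_eq_mul, hexp]
  ring

lemma integral_sq_sub_sq_integral_cos_sq_add_mul_sin_sq_gaussianReal (c : ℝ) (v : ℝ≥0) :
    ∫ x, (cos x ^ 2 + c * sin x ^ 2) ^ 2 ∂gaussianReal 0 v
        - (∫ x, (cos x ^ 2 + c * sin x ^ 2) ∂gaussianReal 0 v) ^ 2
      = (1 - c) ^ 2 / 8 * (1 - exp (-(4 * v))) ^ 2 := by
  have hcos : MemLp (fun x ↦ cos (2 * x)) 2 (gaussianReal 0 v) := memLp_cos_const_mul 2 2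
  have hmemLp : MemLp (fun x ↦ (1 + c) / 2 + (1 - c) / 2 * cos (2 * x)) 2 (gaussianReal 0 v) :=
    (memLp_const ((1 + c) / 2)).add (hcos.const_mul _)
  simp only [cos_sq_add_mul_sin_sq]
  calc _ = Var[fun x ↦ (1 + c) / 2 + (1 - c) / 2 * cos (2 * x); gaussianReal 0 v] :=
        (variance_eq_sub hmemLp).symm
    _ = ((1 - c) / 2) ^ 2 * Var[fun x ↦ cos (2 * x); gaussianReal 0 v] := by
        rw [variance_const_add (by fun_prop), variance_const_mul]
    _ = _ := by
        rw [variance_cos_const_mul_gaussianReal]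
        ring_nf

theorem pauli_fidelity_variance_OU_calibrated_general (k γ t : ℝ) (hk : 0 < k)
    (ht : 0 ≤ t)
    (τ : ℝ) (hτ : τ = Real.exp (-k * t) * Real.sinh (k * t) / k)
    (μ : Measure ℝ) (hμ : μ = gaussianReal 0 (Real.toNNReal (γ ^ 2 * τ)))
    (S₀ : ℝ) :
    ∫ x, (Real.cos x ^ 2 + S₀ ^ 2 * Real.sin x ^ 2) ^ 2 ∂μ
        - (∫ x, (Real.cos x ^ 2 + S₀ ^ 2 * Real.sin x ^ 2) ∂μ) ^ 2 =
      (1 / 8) * (1 - S₀ ^ 2) ^ 2 * (1 - Real.exp (-4 * γ ^ 2 * τ)) ^ 2 := by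
  have hτ_nonneg : 0 ≤ τ := by
    have : 0 ≤ sinh (k * t) := sinh_nonneg_iff.mpr (by positivity)
    rw [hτ]
    positivity
  rw [hμ, integral_sq_sub_sq_integral_cos_sq_add_mul_sin_sq_gaussianReal,
    coe_toNNReal _ (by positivity)]
  ring_nf

theorem pauli_fidelity_variance_OU_calibrated (k γ t : ℝ) (hk : 0 < k) (hγ : 0 < γ)
    (ht : 0 ≤ t)
    (τ : ℝ) (hτ : τ = Real.exp (-k * t) * Real.sinh (k * t) / k)
    (μ : Measure ℝ) (hμ : μ = gaussianReal 0 (Real.toNNReal (γ ^ 2 * τ)))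
    (S₀ : ℝ) :
    ∫ x, (Real.cos x ^ 2 + S₀ ^ 2 * Real.sin x ^ 2) ^ 2 ∂μ
        - (∫ x, (Real.cos x ^ 2 + S₀ ^ 2 * Real.sin x ^ 2) ∂μ) ^ 2 =
      (1 / 8) * (1 - S₀ ^ 2) ^ 2 * (1 - Real.exp (-4 * γ ^ 2 * τ)) ^ 2 :=
  pauli_fidelity_variance_OU_calibrated_general k γ t hk ht τ hτ μ hμ S₀
end

section
/- Let k > 0, γ > 0, t ≥ 0, and let X₀ and Z be independent real-valued random variables on a probability space, with X₀ distributed as gaussianReal 0 (γ²/(2k)) and Z distributed as gaussianReal 0 (γ²·(1 - exp(-2·k·t))/(2k)). Then for every natural number n, E[((exp(-k·t) - 1)·X₀ + Z)^(2n)] = (2n - 1)‼ · (γ²·(1 - exp(-k·t))/k)ⁿ. -/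
/-!
The increment `c X₀ + Z`, with `c = exp (-kt) - 1`, is a sum of independent centred Gaussians,
hence centred Gaussian with variance
`c² γ² / (2k) + γ² (1 - exp (-2kt)) / (2k) = γ² (1 - exp (-kt)) / k`.
The even moments of `N(0, v)` are `(2n - 1)‼ vⁿ`: on the half-line the moment integral is a Gamma
integral, and `Γ(n + 1/2) = (2n - 1)‼ √π / 2ⁿ`.
-/

open ProbabilityTheory MeasureTheory Nat Real Set
open scoped NNReal

lemma integral_even_pow_mul_exp_neg_sq_div {v : ℝ} (hv : 0 < v) (n : ℕ) :
    ∫ x : ℝ, x ^ (2 * n) * exp (-x ^ 2 / (2 * v)) = (2 * n - 1)‼ * v ^ n * √(2 * π * v) := by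
  have h2v : 0 < 2 * v := by positivity
  have h_even : ∫ x : ℝ, x ^ (2 * n) * exp (-x ^ 2 / (2 * v))
      = 2 * ∫ x in Ioi (0 : ℝ), x ^ (2 * n) * exp (-x ^ 2 / (2 * v)) := by
    rw [← integral_comp_abs]
    simp only [(even_two_mul n).pow_abs, sq_abs]
  have h_half : ∫ x in Ioi (0 : ℝ), x ^ (2 * n) * exp (-x ^ 2 / (2 * v))
      = (2 * v)⁻¹ ^ (-(2 * n + 1 : ℝ) / 2) * (1 / 2) * Gamma ((2 * n + 1 : ℝ) / 2) := by
    rw [← integral_rpow_mul_exp_neg_mul_rpow two_pos (neg_one_lt_zero.trans_le (by positivity))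
      (inv_pos.2 h2v)]
    refine setIntegral_congr_fun measurableSet_Ioi fun x _ => ?_
    norm_cast
    ring_nf
  have h_rpow : (2 * v)⁻¹ ^ (-(2 * n + 1 : ℝ) / 2) = (2 * v) ^ n * √(2 * v) := by
    rw [inv_rpow h2v.le, ← rpow_neg h2v.le, show -(-(2 * n + 1 : ℝ) / 2) = n + 1 / 2 by ring,
      rpow_add h2v, rpow_natCast, ← sqrt_eq_rpow]
  have h_gamma : Gamma ((2 * n + 1 : ℝ) / 2) = (2 * n - 1)‼ * √π / 2 ^ n := by
    rw [show (2 * n + 1 : ℝ) / 2 = n + 1 / 2 by ring, Gamma_nat_add_half]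
  rw [h_even, h_half, h_rpow, h_gamma, show 2 * π * v = π * (2 * v) by ring, sqrt_mul pi_pos.le]
  field_simp
  ring

lemma integral_even_pow_gaussianReal (v : ℝ≥0) (n : ℕ) :
    ∫ x, x ^ (2 * n) ∂gaussianReal 0 v = (2 * n - 1)‼ * (v : ℝ) ^ n := by
  rcases eq_or_ne v 0 with rfl | hv
  · cases n <;> simp [gaussianReal_zero_var]
  have h_density : ∫ x, gaussianPDFReal 0 v x • x ^ (2 * n)
      = (√(2 * π * v))⁻¹ * ∫ x, x ^ (2 * n) * exp (-x ^ 2 / (2 * v)) := by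
    rw [← integral_const_mul]
    congr with x
    rw [smul_eq_mul, gaussianPDFReal, sub_zero]
    ring
  have h_norm : 0 < √(2 * π * v) := by positivity
  rw [integral_gaussianReal_eq_integral_smul hv, h_density,
    integral_even_pow_mul_exp_neg_sq_div (NNReal.coe_pos.2 (pos_iff_ne_zero.2 hv))]
  field_simp

lemma integral_even_pow_of_map_eq_gaussianReal {Ω : Type*} [MeasurableSpace Ω] {P : Measure Ω}
    {Y : Ω → ℝ} {v : ℝ≥0} (hY : P.map Y = gaussianReal 0 v) (n : ℕ) :
    ∫ ω, Y ω ^ (2 * n) ∂P = (2 * n - 1)‼ * (v : ℝ) ^ n := by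
  have hY_meas : AEMeasurable Y P :=
    .of_map_ne_zero (by rw [hY]; exact IsProbabilityMeasure.ne_zero _)
  rw [← integral_even_pow_gaussianReal, ← hY, integral_map hY_meas (by fun_prop)]

theorem OU_increment_even_moments_stationary_general
    (k γ t : ℝ) (hk : 0 < k) (ht : 0 ≤ t)
    {Ω : Type*} [MeasureSpace Ω]
    (X₀ Z : Ω → ℝ)
    (hindep : IndepFun X₀ Z ℙ)
    (hX₀ : Measure.map X₀ ℙ = gaussianReal 0 (Real.toNNReal (γ ^ 2 / (2 * k))))
    (hZ : Measure.map Z ℙ =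
      gaussianReal 0 (Real.toNNReal (γ ^ 2 * (1 - Real.exp (-2 * k * t)) / (2 * k))))
    (n : ℕ) :
    ∫ ω, ((Real.exp (-k * t) - 1) * X₀ ω + Z ω) ^ (2 * n) ∂ℙ =
      ((2 * n - 1)‼ : ℝ) * (γ ^ 2 * (1 - Real.exp (-k * t)) / k) ^ n := by
  have hX₀_law : HasLaw X₀ (gaussianReal 0 (γ ^ 2 / (2 * k)).toNNReal) :=
    ⟨.of_map_ne_zero (by rw [hX₀]; exact IsProbabilityMeasure.ne_zero _), hX₀⟩
  have h_law := gaussianReal_add_gaussianReal_of_indepFun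
    (hindep.comp (measurable_const_mul _) measurable_id)
    (gaussianReal_const_mul hX₀_law (exp (-k * t) - 1)).map_eq hZ
  rw [mul_zero, add_zero] at h_law
  refine (integral_even_pow_of_map_eq_gaussianReal h_law n).trans ?_
  have h_exp : exp (-2 * k * t) = exp (-k * t) ^ 2 := by rw [← exp_nat_mul]; ring_nf
  have h_decay : 0 ≤ 1 - exp (-2 * k * t) := sub_nonneg.2 (exp_le_one_iff.2 (by nlinarith))
  have h_var : (exp (-k * t) - 1) ^ 2 * (γ ^ 2 / (2 * k)) + γ ^ 2 * (1 - exp (-2 * k * t)) / (2 * k)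
      = γ ^ 2 * (1 - exp (-k * t)) / k := by
    rw [h_exp]
    field_simp
    ring
  simp only [NNReal.coe_add, NNReal.coe_mul, NNReal.coe_mk]
  rw [Real.coe_toNNReal _ (by positivity), Real.coe_toNNReal _ (by positivity), h_var]

theorem OU_increment_even_moments_stationary
    (k γ t : ℝ) (hk : 0 < k) (hγ : 0 < γ) (ht : 0 ≤ t)
    {Ω : Type*} [MeasureSpace Ω] [IsProbabilityMeasure (ℙ : Measure Ω)]
    (X₀ Z : Ω → ℝ)
    (hmX₀ : Measurable X₀) (hmZ : Measurable Z)
    (hindep : IndepFun X₀ Z ℙ)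
    (hX₀ : Measure.map X₀ ℙ = gaussianReal 0 (Real.toNNReal (γ ^ 2 / (2 * k))))
    (hZ : Measure.map Z ℙ =
      gaussianReal 0 (Real.toNNReal (γ ^ 2 * (1 - Real.exp (-2 * k * t)) / (2 * k))))
    (n : ℕ) :
    ∫ ω, ((Real.exp (-k * t) - 1) * X₀ ω + Z ω) ^ (2 * n) ∂ℙ =
      ((2 * n - 1)‼ : ℝ) * (γ ^ 2 * (1 - Real.exp (-k * t)) / k) ^ n :=
  OU_increment_even_moments_stationary_general k γ t hk ht X₀ Z hindep hX₀ hZ n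
end

section
/- Let A and B be n×n complex matrices satisfying the double-commutator relation [A, [A, B]] = -4·B, where [M, N] := M·N - N·M. Then for every real t, exp(-t·A) · B · exp(t·A) = (cos(2·t)) • B - ((sin(2·t))/2) • [A, B]. -/
open Matrix

attribute [local instance] Matrix.linftyOpNormedRing Matrix.linftyOpNormedAlgebra

open NormedSpace in
private lemma hasDerivAt_comp_ofReal {E : Type*} [NormedAddCommGroup E] [NormedSpace ℂ E]
    {f : ℂ → E} {f' : E} {t : ℝ} (hf : HasDerivAt f f' (t : ℂ)) :
    HasDerivAt (fun s : ℝ => f s) f' t := by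
  have h3 := (hf.hasFDerivAt.restrictScalars ℝ).comp t (Complex.ofRealCLM.hasFDerivAt (x := t))
  have h4 := h3.hasDerivAt
  simpa [Function.comp_def] using h4

theorem interaction_picture_rotation (n : ℕ) (A B : Matrix (Fin n) (Fin n) ℂ)
    (h : ⁅A, ⁅A, B⁆⁆ = (-4 : ℂ) • B) (t : ℝ) :
    NormedSpace.exp ((-(t : ℂ)) • A) * B * NormedSpace.exp ((t : ℂ) • A) =
      (Real.cos (2 * t) : ℂ) • B - ((Real.sin (2 * t) / 2 : ℝ) : ℂ) • ⁅A, B⁆ := by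
  set C := ⁅A, B⁆ with hC
  set m : ℝ → Matrix (Fin n) (Fin n) ℂ := fun s =>
    (Real.cos (2 * s) : ℂ) • B - ((Real.sin (2 * s) / 2 : ℝ) : ℂ) • C with hm
  set Φ : ℝ → Matrix (Fin n) (Fin n) ℂ := fun s =>
    NormedSpace.exp ((s : ℂ) • A) * m s * NormedSpace.exp ((s : ℂ) • (-A)) with hΦ
  -- derivative of the exponential factors
  have he : ∀ s : ℝ, HasDerivAt (fun u : ℝ => NormedSpace.exp ((u : ℂ) • A))
      (NormedSpace.exp ((s : ℂ) • A) * A) s := fun s =>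
    hasDerivAt_comp_ofReal (hasDerivAt_exp_smul_const A (s : ℂ))
  have he' : ∀ s : ℝ, HasDerivAt (fun u : ℝ => NormedSpace.exp ((u : ℂ) • (-A)))
      ((-A) * NormedSpace.exp ((s : ℂ) • (-A))) s := fun s =>
    hasDerivAt_comp_ofReal (hasDerivAt_exp_smul_const' (-A) (s : ℂ))
  -- derivative of the middle factor
  have hmd : ∀ s : ℝ, HasDerivAt m
      (((-(2 * Real.sin (2 * s)) : ℝ) : ℂ) • B - (((Real.cos (2 * s) * 2) / 2 : ℝ) : ℂ) • C) s := by
    intro s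
    have hcos : HasDerivAt (fun u : ℝ => Real.cos (2 * u)) (-(2 * Real.sin (2 * s))) s := by
      have := (Real.hasDerivAt_cos (2 * s)).comp s ((hasDerivAt_id s).const_mul 2)
      simpa [Function.comp_def, mul_comm] using this
    have hsin : HasDerivAt (fun u : ℝ => Real.sin (2 * u) / 2) (Real.cos (2 * s) * 2 / 2) s := by
      have := ((Real.hasDerivAt_sin (2 * s)).comp s ((hasDerivAt_id s).const_mul 2)).div_const 2
      simpa [Function.comp_def] using this
    exact ((hcos.ofReal_comp).smul_const B).sub ((hsin.ofReal_comp).smul_const C)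
  -- Φ has zero derivative
  have hΦd : ∀ s : ℝ, HasDerivAt Φ 0 s := by
    intro s
    have h1 := (((he s).mul (hmd s)).mul (he' s))
    refine h1.congr_deriv (Eq.symm ?_)
    set e := NormedSpace.exp ((s : ℂ) • A)
    set e' := NormedSpace.exp ((s : ℂ) • (-A))
    have hAC : ⁅A, C⁆ = (-4 : ℂ) • B := h
    have key : A * m s - m s * A
        + (((-(2 * Real.sin (2 * s)) : ℝ) : ℂ) • B - (((Real.cos (2 * s) * 2) / 2 : ℝ) : ℂ) • C)
        = 0 := by
      have hAB : A * B - B * A = C := rfl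
      have hACm : A * C - C * A = (-4 : ℂ) • B := hAC
      simp only [hm, mul_sub, sub_mul, mul_smul_comm, smul_mul_assoc]
      push_cast
      rw [show (A * B : Matrix (Fin n) (Fin n) ℂ) = C + B * A by rw [← hAB]; abel,
        show (A * C : Matrix (Fin n) (Fin n) ℂ) = (-4 : ℂ) • B + C * A by rw [← hACm]; abel]
      push_cast
      module
    calc (0 : Matrix (Fin n) (Fin n) ℂ)
        = e * (A * m s - m s * A
            + (((-(2 * Real.sin (2 * s)) : ℝ) : ℂ) • B
              - (((Real.cos (2 * s) * 2) / 2 : ℝ) : ℂ) • C)) * e' := by rw [key]; simp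
      _ = (e * A * m s
            + e * (((-(2 * Real.sin (2 * s)) : ℝ) : ℂ) • B
              - (((Real.cos (2 * s) * 2) / 2 : ℝ) : ℂ) • C)) * e'
            + e * m s * (-A * e') := by
          simp only [mul_add, add_mul, mul_sub, sub_mul, mul_assoc, mul_neg, neg_mul]
          abel
  -- hence Φ is constant
  have hconst : Φ t = Φ 0 := by
    refine is_const_of_deriv_eq_zero (fun x => (hΦd x).differentiableAt) (fun x => (hΦd x).deriv) t 0
  have hΦ0 : Φ 0 = B := by
    simp [hΦ, hm, NormedSpace.exp_zero]
  -- exponential inverses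
  have hcomm : Commute ((t : ℂ) • A) ((t : ℂ) • (-A)) := by
    simpa using ((Commute.refl A).neg_right.smul_left ((t : ℂ))).smul_right ((t : ℂ))
  have hinv1 : NormedSpace.exp ((t : ℂ) • A) * NormedSpace.exp ((t : ℂ) • (-A)) = 1 := by
    erw [← NormedSpace.exp_add_of_commute hcomm]; simp [NormedSpace.exp_zero]
  have hinv2 : NormedSpace.exp ((t : ℂ) • (-A)) * NormedSpace.exp ((t : ℂ) • A) = 1 := by
    erw [← NormedSpace.exp_add_of_commute hcomm.symm]; simp [NormedSpace.exp_zero]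
  have hB : NormedSpace.exp ((t : ℂ) • A) * m t * NormedSpace.exp ((t : ℂ) • (-A)) = B := by
    rw [← hΦ0, ← hconst]
  have hmain : NormedSpace.exp ((t : ℂ) • (-A)) * B * NormedSpace.exp ((t : ℂ) • A) = m t := by
    rw [← hB]
    calc NormedSpace.exp ((t : ℂ) • (-A))
          * (NormedSpace.exp ((t : ℂ) • A) * m t * NormedSpace.exp ((t : ℂ) • (-A)))
          * NormedSpace.exp ((t : ℂ) • A)
        = (NormedSpace.exp ((t : ℂ) • (-A)) * NormedSpace.exp ((t : ℂ) • A)) * m t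
            * (NormedSpace.exp ((t : ℂ) • (-A)) * NormedSpace.exp ((t : ℂ) • A)) := by
          simp only [mul_assoc]
      _ = m t := by rw [hinv2]; simp
  have harg : (-(t : ℂ)) • A = (t : ℂ) • (-A) := by module
  rw [harg]
  exact hmain
end

section
/- Let Q be a Hermitian 2×2 complex matrix with Q² = 1, let φ₀ ∈ ℂ⁴ (indexed by Fin 2 × Fin 2) be a unit vector, and define the 4×4 matrices S := Q ⊗ₖ 1 + 1 ⊗ₖ Q and R := Q ⊗ₖ Q, with S₀ := Re⟨φ₀, S·φ₀⟩ and R₀ := Re⟨φ₀, R·φ₀⟩. Then for every real x, |⟨φ₀, exp(-i·x·S)·φ₀⟩|² = (1/4)·(S₀² + (R₀ - 1)² + 2·(1 - R₀²)·cos(2·x) + (1 - S₀ + R₀)·(1 + S₀ + R₀)·cos²(2·x)). -/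
open Matrix Kronecker Nat

lemma exp_idem {𝔸 : Type*} [NormedRing 𝔸] [NormedAlgebra ℂ 𝔸] [CompleteSpace 𝔸]
    (P : 𝔸) (h : P * P = P) (a : ℂ) :
    NormedSpace.exp (a • P) = 1 + (Complex.exp a - 1) • P := by
  have hpow : ∀ k : ℕ, P ^ (k + 1) = P := by
    intro k; induction k with
    | zero => simp
    | succ k ih => rw [pow_succ, ih, h]
  have hsum : Summable fun n : ℕ => ((n ! : ℂ))⁻¹ • (a • P) ^ n :=
    NormedSpace.expSeries_summable' (𝕂 := ℂ) (a • P)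
  rw [NormedSpace.exp_eq_tsum ℂ]
  show (∑' n : ℕ, ((n ! : ℂ))⁻¹ • (a • P) ^ n) = _
  rw [Summable.tsum_eq_zero_add hsum]
  have key : ∀ n : ℕ, (((n + 1)! : ℂ))⁻¹ • (a • P) ^ (n + 1)
      = ((((n + 1)! : ℂ))⁻¹ * a ^ (n + 1)) • P := by
    intro n
    rw [smul_pow, hpow, smul_smul]
  rw [tsum_congr key]
  have hsum2 : Summable fun n : ℕ => (((n + 1)! : ℂ))⁻¹ * a ^ (n + 1) := by
    have := (NormedSpace.expSeries_summable' (𝕂 := ℂ) a)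
    simpa [smul_eq_mul, Function.comp_def] using ((this.comp_injective (add_left_injective 1)))
  rw [Summable.tsum_smul_const hsum2]
  have hexp : Complex.exp a = 1 + ∑' n : ℕ, (((n + 1)! : ℂ))⁻¹ * a ^ (n + 1) := by
    rw [Complex.exp_eq_exp_ℂ, NormedSpace.exp_eq_tsum ℂ]
    show (∑' n : ℕ, ((n ! : ℂ))⁻¹ • a ^ n) = _
    rw [Summable.tsum_eq_zero_add (NormedSpace.expSeries_summable' (𝕂 := ℂ) a)]
    simp [smul_eq_mul]
  rw [hexp]
  simp only [pow_zero, Nat.factorial_zero, Nat.cast_one, inv_one, one_smul,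
    add_sub_cancel_left]

lemma matrix_exp_idem {m : Type*} [Fintype m] [DecidableEq m]
    (P : Matrix m m ℂ) (h : P * P = P) (a : ℂ) :
    NormedSpace.exp (a • P) = 1 + (Complex.exp a - 1) • P := by
  letI : SeminormedRing (Matrix m m ℂ) := Matrix.linftyOpSemiNormedRing
  letI : NormedRing (Matrix m m ℂ) := Matrix.linftyOpNormedRing
  letI : NormedAlgebra ℂ (Matrix m m ℂ) := Matrix.linftyOpNormedAlgebra
  exact exp_idem P h a

lemma kron_conjTranspose {l m n p : Type*} (A : Matrix l m ℂ) (B : Matrix n p ℂ) :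
    (A ⊗ₖ B)ᴴ = Aᴴ ⊗ₖ Bᴴ := by
  ext ⟨i, j⟩ ⟨k, l⟩
  simp [Matrix.conjTranspose_apply, mul_comm]

lemma herm_dot_real {n : Type*} [Fintype n] (M : Matrix n n ℂ) (hM : M.IsHermitian)
    (v : n → ℂ) :
    star v ⬝ᵥ M.mulVec v = (((star v ⬝ᵥ M.mulVec v).re : ℝ) : ℂ) := by
  have hself : star v ⬝ᵥ M.mulVec v = star (star v ⬝ᵥ M.mulVec v) :=
    calc star v ⬝ᵥ M.mulVec v = star v ⬝ᵥ Mᴴ.mulVec v := by rw [hM.eq]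
      _ = (star v ᵥ* Mᴴ) ⬝ᵥ v := Matrix.dotProduct_mulVec _ _ _
      _ = star (M.mulVec v) ⬝ᵥ v := by rw [Matrix.star_mulVec]
      _ = star (star v ⬝ᵥ M.mulVec v) := by rw [star_dotProduct]
  exact (Complex.conj_eq_iff_re.mp hself.symm).symm

theorem two_qubit_pauli_fidelity
    (Q : Matrix (Fin 2) (Fin 2) ℂ) (hQ : Q.IsHermitian) (hQ2 : Q ^ 2 = 1)
    (φ₀ : Fin 2 × Fin 2 → ℂ) (hφ₀ : star φ₀ ⬝ᵥ φ₀ = 1)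
    (S R : Matrix (Fin 2 × Fin 2) (Fin 2 × Fin 2) ℂ)
    (hS : S = Q ⊗ₖ (1 : Matrix (Fin 2) (Fin 2) ℂ) + (1 : Matrix (Fin 2) (Fin 2) ℂ) ⊗ₖ Q)
    (hR : R = Q ⊗ₖ Q)
    (S₀ R₀ : ℝ)
    (hS₀ : S₀ = (star φ₀ ⬝ᵥ S.mulVec φ₀).re)
    (hR₀ : R₀ = (star φ₀ ⬝ᵥ R.mulVec φ₀).re)
    (x : ℝ) :
    ‖star φ₀ ⬝ᵥ
        (NormedSpace.exp ((-(Complex.I * (x : ℂ))) • S)).mulVec φ₀‖ ^ 2 =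
      (1 / 4) * (S₀ ^ 2 + (R₀ - 1) ^ 2 + 2 * (1 - R₀ ^ 2) * Real.cos (2 * x)
        + (1 - S₀ + R₀) * (1 + S₀ + R₀) * Real.cos (2 * x) ^ 2) := by
  have hQ2' : Q * Q = 1 := by rw [← pow_two]; exact hQ2
  -- algebraic relations
  have hRS : R * S = S := by
    rw [hR, hS, mul_add, ← Matrix.mul_kronecker_mul, ← Matrix.mul_kronecker_mul, hQ2']
    simp [add_comm]
  have hSR : S * R = S := by
    rw [hR, hS, add_mul, ← Matrix.mul_kronecker_mul, ← Matrix.mul_kronecker_mul, hQ2']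
    simp [add_comm]
  have hS2 : S * S = (2 : ℂ) • (1 : Matrix (Fin 2 × Fin 2) (Fin 2 × Fin 2) ℂ) + (2 : ℂ) • R :=
    by
    rw [hS, hR, add_mul, mul_add, mul_add, ← Matrix.mul_kronecker_mul,
      ← Matrix.mul_kronecker_mul, ← Matrix.mul_kronecker_mul, ← Matrix.mul_kronecker_mul,
      hQ2']
    simp only [mul_one, one_mul, Matrix.one_kronecker_one]
    module
  have hS3 : S * S * S = (4 : ℂ) • S := by
    rw [hS2, add_mul, smul_mul_assoc, smul_mul_assoc, one_mul, hRS]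
    module
  have hS3' : S * (S * S) = (4 : ℂ) • S := by rw [← mul_assoc, hS3]
  have hS4 : S * S * (S * S) = (4 : ℂ) • (S * S) := by
    rw [← mul_assoc, hS3, smul_mul_assoc]
  -- projectors
  set Pp : Matrix (Fin 2 × Fin 2) (Fin 2 × Fin 2) ℂ := (8 : ℂ)⁻¹ • (S * S + (2 : ℂ) • S)
    with hPp_def
  set Pm : Matrix (Fin 2 × Fin 2) (Fin 2 × Fin 2) ℂ := (8 : ℂ)⁻¹ • (S * S - (2 : ℂ) • S)
    with hPm_def
  have hPp : Pp * Pp = Pp := by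
    rw [hPp_def]
    simp only [smul_mul_assoc, mul_smul_comm, add_mul, mul_add, sub_mul, mul_sub,
      hS4, hS3, hS3']
    match_scalars <;> norm_num
  have hPm : Pm * Pm = Pm := by
    rw [hPm_def]
    simp only [smul_mul_assoc, mul_smul_comm, add_mul, mul_add, sub_mul, mul_sub,
      hS4, hS3, hS3']
    match_scalars <;> norm_num
  have hPpPm : Pp * Pm = 0 := by
    rw [hPp_def, hPm_def]
    simp only [smul_mul_assoc, mul_smul_comm, add_mul, mul_add, sub_mul, mul_sub,
      hS4, hS3, hS3']
    match_scalars <;> norm_num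
  have hPmPp : Pm * Pp = 0 := by
    rw [hPp_def, hPm_def]
    simp only [smul_mul_assoc, mul_smul_comm, add_mul, mul_add, sub_mul, mul_sub,
      hS4, hS3, hS3']
    match_scalars <;> norm_num
  -- exponential decomposition
  have hsplit : (-(Complex.I * (x : ℂ))) • S
      = ((-(2 * Complex.I * (x : ℂ))) • Pp) + ((2 * Complex.I * (x : ℂ)) • Pm) := by
    rw [hPp_def, hPm_def]
    module
  have hcomm : Commute ((-(2 * Complex.I * (x : ℂ))) • Pp) ((2 * Complex.I * (x : ℂ)) • Pm) := by
    unfold Commute SemiconjBy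
    simp only [smul_mul_assoc, mul_smul_comm, hPpPm, hPmPp, smul_zero]
  have hexpS : NormedSpace.exp ((-(Complex.I * (x : ℂ))) • S)
      = 1 + (Complex.exp (-(2 * Complex.I * (x : ℂ))) - 1) • Pp
          + (Complex.exp (2 * Complex.I * (x : ℂ)) - 1) • Pm := by
    rw [hsplit, Matrix.exp_add_of_commute _ _ hcomm, matrix_exp_idem Pp hPp,
      matrix_exp_idem Pm hPm]
    simp only [mul_add, add_mul, one_mul, mul_one, smul_mul_assoc, mul_smul_comm,
      hPpPm, smul_zero]
    abel_nf
  -- expectation values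
  have hsreal : star φ₀ ⬝ᵥ S.mulVec φ₀ = ((S₀ : ℝ) : ℂ) := by
    rw [hS₀]
    refine herm_dot_real S ?_ φ₀
    rw [Matrix.IsHermitian, hS, Matrix.conjTranspose_add, kron_conjTranspose,
      kron_conjTranspose, hQ.eq, Matrix.conjTranspose_one]
  have hrreal : star φ₀ ⬝ᵥ R.mulVec φ₀ = ((R₀ : ℝ) : ℂ) := by
    rw [hR₀]
    refine herm_dot_real R ?_ φ₀
    rw [Matrix.IsHermitian, hR, kron_conjTranspose, hQ.eq]
  have hPpv : star φ₀ ⬝ᵥ Pp.mulVec φ₀ = (8 : ℂ)⁻¹ * (2 + 2 * (R₀ : ℂ) + 2 * (S₀ : ℂ)) := by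
    rw [hPp_def, hS2]
    simp only [Matrix.smul_mulVec, Matrix.add_mulVec, Matrix.one_mulVec,
      dotProduct_add, dotProduct_smul, smul_eq_mul, hφ₀, hsreal, hrreal]
    ring
  have hPmv : star φ₀ ⬝ᵥ Pm.mulVec φ₀ = (8 : ℂ)⁻¹ * (2 + 2 * (R₀ : ℂ) - 2 * (S₀ : ℂ)) := by
    rw [hPm_def, hS2]
    simp only [Matrix.smul_mulVec, Matrix.add_mulVec, Matrix.sub_mulVec,
      Matrix.one_mulVec, dotProduct_add, dotProduct_sub, dotProduct_smul, smul_eq_mul,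
      hφ₀, hsreal, hrreal]
    ring
  -- exponentials as cos/sin
  have he1 : Complex.exp (2 * Complex.I * (x : ℂ))
      = ((Real.cos (2 * x) : ℝ) : ℂ) + ((Real.sin (2 * x) : ℝ) : ℂ) * Complex.I := by
    rw [show (2 * Complex.I * (x : ℂ)) = (((2 * x : ℝ) : ℂ)) * Complex.I by
      push_cast; ring, Complex.exp_mul_I, Complex.ofReal_cos, Complex.ofReal_sin]
  have he2 : Complex.exp (-(2 * Complex.I * (x : ℂ)))
      = ((Real.cos (2 * x) : ℝ) : ℂ) - ((Real.sin (2 * x) : ℝ) : ℂ) * Complex.I := by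
    rw [show (-(2 * Complex.I * (x : ℂ))) = (((-(2 * x) : ℝ) : ℂ)) * Complex.I by
      push_cast; ring, Complex.exp_mul_I, ← Complex.ofReal_cos, ← Complex.ofReal_sin,
      Real.cos_neg, Real.sin_neg]
    push_cast
    ring
  -- amplitude in closed form
  have hz : star φ₀ ⬝ᵥ (NormedSpace.exp ((-(Complex.I * (x : ℂ))) • S)).mulVec φ₀
      = (((1 + (Real.cos (2 * x) - 1) * ((1 + R₀) / 2)) : ℝ) : ℂ)
        + (((-(Real.sin (2 * x) * S₀ / 2)) : ℝ) : ℂ) * Complex.I := by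
    rw [hexpS]
    simp only [Matrix.add_mulVec, Matrix.smul_mulVec, Matrix.one_mulVec,
      dotProduct_add, dotProduct_smul, smul_eq_mul, hφ₀, hPpv, hPmv, he1, he2]
    push_cast
    ring
  rw [hz, Complex.sq_norm, Complex.normSq_add_mul_I]
  linear_combination (S₀ ^ 2 / 4) * Real.sin_sq_add_cos_sq (2 * x)
end

section
/- Let Q be a Hermitian 2×2 complex matrix with Q² = Q, let φ₀ ∈ ℂ⁴ (indexed by Fin 2 × Fin 2) be a unit vector, and define the 4×4 matrices S := Q ⊗ₖ 1 + 1 ⊗ₖ Q and R := Q ⊗ₖ Q, with S₀ := Re⟨φ₀, S·φ₀⟩ and R₀ := Re⟨φ₀, R·φ₀⟩. Then for every real x, |⟨φ₀, exp(-i·x·S)·φ₀⟩|² = 1 - 2·(cos x - 1)·(S₀² + S₀·(2·R₀·(cos x - 1) - 1) - 2·R₀·(R₀·(cos x - 1) + cos x)). -/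
open Matrix Kronecker

lemma exp_smul_idem_s17 {𝔸 : Type*} [NormedRing 𝔸] [NormedAlgebra ℂ 𝔸] [CompleteSpace 𝔸]
    (P : 𝔸) (hP : P * P = P) (c : ℂ) :
    NormedSpace.exp (c • P) = 1 + (Complex.exp c - 1) • P := by
  have hPn : ∀ n : ℕ, P ^ (n + 1) = P := by
    intro n
    induction n with
    | zero => simp
    | succ k ih => rw [pow_succ, ih, hP]
  have hsum : Summable fun n : ℕ => ((n.factorial : ℂ))⁻¹ • (c • P) ^ n :=
    NormedSpace.expSeries_summable' _
  have hsc : Summable fun n : ℕ => ((n.factorial : ℂ))⁻¹ • c ^ n :=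
    NormedSpace.expSeries_summable' (𝕂 := ℂ) c
  have hsc' : Summable fun n : ℕ => (((n + 1).factorial : ℂ))⁻¹ * c ^ (n + 1) := by
    have := (summable_nat_add_iff 1).mpr hsc
    simpa [smul_eq_mul] using this
  have hexp : (∑' n : ℕ, (((n + 1).factorial : ℂ))⁻¹ * c ^ (n + 1)) = Complex.exp c - 1 := by
    have h := congrFun Complex.exp_eq_exp_ℂ c
    rw [NormedSpace.exp_eq_tsum ℂ] at h
    dsimp only at h
    rw [Summable.tsum_eq_zero_add hsc] at h
    simp only [pow_zero, Nat.factorial_zero, smul_eq_mul] at h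
    rw [h]; simp
  rw [NormedSpace.exp_eq_tsum ℂ]
  dsimp only
  rw [Summable.tsum_eq_zero_add hsum]
  have hterm : ∀ n : ℕ, (((n + 1).factorial : ℂ))⁻¹ • (c • P) ^ (n + 1)
      = ((((n + 1).factorial : ℂ))⁻¹ * c ^ (n + 1)) • P := by
    intro n
    rw [smul_pow, hPn, smul_smul]
  simp only [hterm]
  rw [Summable.tsum_smul_const hsc', hexp]
  simp

lemma kron_conjT {m n : Type*} (A : Matrix m m ℂ) (B : Matrix n n ℂ) :
    (A ⊗ₖ B)ᴴ = Aᴴ ⊗ₖ Bᴴ := by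
  ext ⟨i, j⟩ ⟨k, l⟩
  simp [Matrix.conjTranspose_apply, mul_comm]

lemma herm_dot_real_s17 {n : Type*} [Fintype n] (A : Matrix n n ℂ) (hA : A.IsHermitian)
    (φ : n → ℂ) : star φ ⬝ᵥ A.mulVec φ = (((star φ ⬝ᵥ A.mulVec φ).re : ℝ) : ℂ) := by
  have h1 : (starRingEnd ℂ) (star φ ⬝ᵥ A.mulVec φ) = star φ ⬝ᵥ A.mulVec φ := by
    calc (starRingEnd ℂ) (star φ ⬝ᵥ A.mulVec φ)
        = star (star φ ⬝ᵥ A.mulVec φ) := rfl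
      _ = star (A.mulVec φ) ⬝ᵥ φ := by rw [Matrix.star_dotProduct, star_star]
      _ = (star φ ᵥ* Aᴴ) ⬝ᵥ φ := by rw [Matrix.star_mulVec]
      _ = star φ ⬝ᵥ Aᴴ.mulVec φ := (Matrix.dotProduct_mulVec _ _ _).symm
      _ = star φ ⬝ᵥ A.mulVec φ := by rw [hA.eq]
  exact (Complex.conj_eq_iff_re.mp h1).symm

theorem two_qubit_projection_fidelity
    (Q : Matrix (Fin 2) (Fin 2) ℂ) (hQ : Q.IsHermitian) (hQ2 : Q ^ 2 = Q)
    (φ₀ : Fin 2 × Fin 2 → ℂ) (hφ₀ : star φ₀ ⬝ᵥ φ₀ = 1)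
    (S R : Matrix (Fin 2 × Fin 2) (Fin 2 × Fin 2) ℂ)
    (hS : S = Q ⊗ₖ (1 : Matrix (Fin 2) (Fin 2) ℂ) + (1 : Matrix (Fin 2) (Fin 2) ℂ) ⊗ₖ Q)
    (hR : R = Q ⊗ₖ Q)
    (S₀ R₀ : ℝ)
    (hS₀ : S₀ = (star φ₀ ⬝ᵥ S.mulVec φ₀).re)
    (hR₀ : R₀ = (star φ₀ ⬝ᵥ R.mulVec φ₀).re)
    (x : ℝ) :
    ‖star φ₀ ⬝ᵥ
        (NormedSpace.exp ((-(Complex.I * (x : ℂ))) • S)).mulVec φ₀‖ ^ 2 =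
      1 - 2 * (Real.cos x - 1) *
        (S₀ ^ 2 + S₀ * (2 * R₀ * (Real.cos x - 1) - 1)
          - 2 * R₀ * (R₀ * (Real.cos x - 1) + Real.cos x)) := by
  have hQQ : Q * Q = Q := by rw [← pow_two]; exact hQ2
  have hR2 : R * R = R := by rw [hR, ← Matrix.mul_kronecker_mul, hQQ]
  have hSR : S * R = (2 : ℂ) • R := by
    simp only [hS, hR, add_mul, mul_add, ← Matrix.mul_kronecker_mul, hQQ, Matrix.one_mul,
      Matrix.mul_one, two_smul]
  have hRS : R * S = (2 : ℂ) • R := by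
    simp only [hS, hR, add_mul, mul_add, ← Matrix.mul_kronecker_mul, hQQ, Matrix.one_mul,
      Matrix.mul_one, two_smul]
  have hS2 : S * S = S + (2 : ℂ) • R := by
    simp only [hS, hR, add_mul, mul_add, ← Matrix.mul_kronecker_mul, hQQ, Matrix.one_mul,
      Matrix.mul_one, two_smul]
    abel
  set P₁ : Matrix (Fin 2 × Fin 2) (Fin 2 × Fin 2) ℂ := S - (2 : ℂ) • R with hP₁def
  have hP1 : P₁ * P₁ = P₁ := by
    simp only [hP₁def, sub_mul, mul_sub, smul_mul_assoc, Matrix.mul_smul, hS2, hSR, hRS, hR2,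
      smul_smul]
    module
  have hP1R : P₁ * R = 0 := by
    simp only [hP₁def, sub_mul, smul_mul_assoc, hSR, hR2]
    module
  have hRP1 : R * P₁ = 0 := by
    simp only [hP₁def, mul_sub, Matrix.mul_smul, hRS, hR2]
    module
  set c₁ : ℂ := -(Complex.I * (x : ℂ)) with hc₁
  set c₂ : ℂ := -(2 * Complex.I * (x : ℂ)) with hc₂
  have hM : c₁ • S = c₁ • P₁ + c₂ • R := by
    simp only [hP₁def, smul_sub, smul_smul, hc₁, hc₂]
    module
  letI : SeminormedRing (Matrix (Fin 2 × Fin 2) (Fin 2 × Fin 2) ℂ) :=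
    Matrix.linftyOpSemiNormedRing
  letI : NormedRing (Matrix (Fin 2 × Fin 2) (Fin 2 × Fin 2) ℂ) := Matrix.linftyOpNormedRing
  letI : NormedAlgebra ℂ (Matrix (Fin 2 × Fin 2) (Fin 2 × Fin 2) ℂ) :=
    Matrix.linftyOpNormedAlgebra
  have hcomm : Commute (c₁ • P₁) (c₂ • R) := by
    show _ = _
    rw [smul_mul_smul_comm, smul_mul_smul_comm, hP1R, hRP1, smul_zero, smul_zero]
  have hexp : NormedSpace.exp (c₁ • S) =
      1 + (Complex.exp c₁ - 1) • P₁ + (Complex.exp c₂ - 1) • R := by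
    rw [hM, Matrix.exp_add_of_commute _ _ hcomm]
    erw [exp_smul_idem_s17 P₁ hP1, exp_smul_idem_s17 R hR2]
    rw [mul_add, mul_one, add_mul, one_mul, smul_mul_smul_comm, hP1R, smul_zero, add_zero]
  have hs : star φ₀ ⬝ᵥ S.mulVec φ₀ = ((S₀ : ℝ) : ℂ) := by
    rw [hS₀]
    refine herm_dot_real_s17 S ?_ φ₀
    rw [Matrix.IsHermitian, hS, Matrix.conjTranspose_add, kron_conjT, kron_conjT, hQ.eq,
      Matrix.conjTranspose_one]
  have hr : star φ₀ ⬝ᵥ R.mulVec φ₀ = ((R₀ : ℝ) : ℂ) := by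
    rw [hR₀]
    refine herm_dot_real_s17 R ?_ φ₀
    rw [Matrix.IsHermitian, hR, kron_conjT, hQ.eq]
  have hf : star φ₀ ⬝ᵥ (NormedSpace.exp (c₁ • S)).mulVec φ₀ =
      1 + (Complex.exp c₁ - 1) * (((S₀ : ℝ) : ℂ) - 2 * ((R₀ : ℝ) : ℂ))
        + (Complex.exp c₂ - 1) * ((R₀ : ℝ) : ℂ) := by
    rw [hexp]
    simp only [Matrix.add_mulVec, Matrix.smul_mulVec, Matrix.one_mulVec, hP₁def,
      Matrix.sub_mulVec, dotProduct_add, dotProduct_smul, dotProduct_sub, hφ₀, hs, hr,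
      smul_eq_mul, Matrix.smul_mulVec]
    try ring
  rw [hf]
  have e1 : Complex.exp c₁ = ((Real.cos x : ℝ) : ℂ) - ((Real.sin x : ℝ) : ℂ) * Complex.I := by
    rw [show c₁ = ((-x : ℝ) : ℂ) * Complex.I by rw [hc₁]; push_cast; ring, Complex.exp_mul_I,
      ← Complex.ofReal_cos, ← Complex.ofReal_sin, Real.cos_neg, Real.sin_neg]
    push_cast; ring
  have e2 : Complex.exp c₂ = ((Real.cos (2 * x) : ℝ) : ℂ)
      - ((Real.sin (2 * x) : ℝ) : ℂ) * Complex.I := by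
    rw [show c₂ = ((-(2 * x) : ℝ) : ℂ) * Complex.I by rw [hc₂]; push_cast; ring,
      Complex.exp_mul_I, ← Complex.ofReal_cos, ← Complex.ofReal_sin, Real.cos_neg, Real.sin_neg]
    push_cast; ring
  rw [e1, e2, Complex.sq_norm]
  simp only [Complex.normSq_apply, Complex.add_re, Complex.add_im, Complex.sub_re,
    Complex.sub_im, Complex.mul_re, Complex.mul_im, Complex.one_re, Complex.one_im,
    Complex.ofReal_re, Complex.ofReal_im, Complex.I_re, Complex.I_im,
    Complex.re_ofNat, Complex.im_ofNat]
  rw [Real.cos_two_mul, Real.sin_two_mul]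
  linear_combination (S₀ - 2 * R₀ + 2 * Real.cos x * R₀) ^ 2 * Real.sin_sq_add_cos_sq x
end

section
/- Let Q₁ and Q₂ be 2×2 complex matrices, let u, v ∈ ℂ², and let S := Q₁ ⊗ₖ 1 + 1 ⊗ₖ Q₂ act on ℂ⁴ (indexed by Fin 2 × Fin 2). Then for every real x, writing u ⊗ v for the Kronecker (tensor) product vector (u ⊗ v)_{(i,j)} := uᵢ·vⱼ, the fidelity factors: |⟨u ⊗ v, exp(-i·x·S)·(u ⊗ v)⟩|² = |⟨u, exp(-i·x·Q₁)·u⟩|² · |⟨v, exp(-i·x·Q₂)·v⟩|². -/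
open Matrix Kronecker

noncomputable def kronR : Matrix (Fin 2) (Fin 2) ℂ →ₐ[ℂ]
    Matrix (Fin 2 × Fin 2) (Fin 2 × Fin 2) ℂ :=
  AlgHom.ofLinearMap
    { toFun := fun A => A ⊗ₖ (1 : Matrix (Fin 2) (Fin 2) ℂ)
      map_add' := fun A B => Matrix.add_kronecker A B 1
      map_smul' := fun c A => Matrix.smul_kronecker c A 1 }
    (Matrix.one_kronecker_one)
    (fun A B => by show _ = _; simp only [LinearMap.coe_mk, AddHom.coe_mk]; rw [← Matrix.mul_kronecker_mul, one_mul])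

noncomputable def kronL : Matrix (Fin 2) (Fin 2) ℂ →ₐ[ℂ]
    Matrix (Fin 2 × Fin 2) (Fin 2 × Fin 2) ℂ :=
  AlgHom.ofLinearMap
    { toFun := fun B => (1 : Matrix (Fin 2) (Fin 2) ℂ) ⊗ₖ B
      map_add' := fun A B => Matrix.kronecker_add 1 A B
      map_smul' := fun c A => Matrix.kronecker_smul c 1 A }
    (Matrix.one_kronecker_one)
    (fun A B => by show _ = _; simp only [LinearMap.coe_mk, AddHom.coe_mk]; rw [← Matrix.mul_kronecker_mul, one_mul])

lemma exp_kron_sum (A B : Matrix (Fin 2) (Fin 2) ℂ) :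
    NormedSpace.exp (A ⊗ₖ (1 : Matrix (Fin 2) (Fin 2) ℂ)
        + (1 : Matrix (Fin 2) (Fin 2) ℂ) ⊗ₖ B)
      = NormedSpace.exp A ⊗ₖ NormedSpace.exp B := by
  have hcomm : Commute (A ⊗ₖ (1 : Matrix (Fin 2) (Fin 2) ℂ))
      ((1 : Matrix (Fin 2) (Fin 2) ℂ) ⊗ₖ B) := by
    unfold Commute SemiconjBy
    rw [← Matrix.mul_kronecker_mul, ← Matrix.mul_kronecker_mul]
    simp
  rw [Matrix.exp_add_of_commute _ _ hcomm]
  have h1 : NormedSpace.exp (A ⊗ₖ (1 : Matrix (Fin 2) (Fin 2) ℂ))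
      = NormedSpace.exp A ⊗ₖ (1 : Matrix (Fin 2) (Fin 2) ℂ) := by
    letI : SeminormedRing (Matrix (Fin 2) (Fin 2) ℂ) := Matrix.linftyOpSemiNormedRing
    letI : NormedRing (Matrix (Fin 2) (Fin 2) ℂ) := Matrix.linftyOpNormedRing
    letI : NormedAlgebra ℂ (Matrix (Fin 2) (Fin 2) ℂ) := Matrix.linftyOpNormedAlgebra
    letI : SeminormedRing (Matrix (Fin 2 × Fin 2) (Fin 2 × Fin 2) ℂ) :=
      Matrix.linftyOpSemiNormedRing
    letI : NormedRing (Matrix (Fin 2 × Fin 2) (Fin 2 × Fin 2) ℂ) := Matrix.linftyOpNormedRing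
    letI : NormedAlgebra ℂ (Matrix (Fin 2 × Fin 2) (Fin 2 × Fin 2) ℂ) :=
      Matrix.linftyOpNormedAlgebra
    letI : NormedAlgebra ℚ (Matrix (Fin 2) (Fin 2) ℂ) := Matrix.linftyOpNormedAlgebra
    letI : NormedAlgebra ℚ (Matrix (Fin 2 × Fin 2) (Fin 2 × Fin 2) ℂ) :=
      Matrix.linftyOpNormedAlgebra
    have := NormedSpace.map_exp kronR (LinearMap.continuous_of_finiteDimensional kronR.toLinearMap) A
    simp only [kronR, AlgHom.ofLinearMap] at this
    exact this.symm
  have h2 : NormedSpace.exp ((1 : Matrix (Fin 2) (Fin 2) ℂ) ⊗ₖ B)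
      = (1 : Matrix (Fin 2) (Fin 2) ℂ) ⊗ₖ NormedSpace.exp B := by
    letI : SeminormedRing (Matrix (Fin 2) (Fin 2) ℂ) := Matrix.linftyOpSemiNormedRing
    letI : NormedRing (Matrix (Fin 2) (Fin 2) ℂ) := Matrix.linftyOpNormedRing
    letI : NormedAlgebra ℂ (Matrix (Fin 2) (Fin 2) ℂ) := Matrix.linftyOpNormedAlgebra
    letI : SeminormedRing (Matrix (Fin 2 × Fin 2) (Fin 2 × Fin 2) ℂ) :=
      Matrix.linftyOpSemiNormedRing
    letI : NormedRing (Matrix (Fin 2 × Fin 2) (Fin 2 × Fin 2) ℂ) := Matrix.linftyOpNormedRing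
    letI : NormedAlgebra ℂ (Matrix (Fin 2 × Fin 2) (Fin 2 × Fin 2) ℂ) :=
      Matrix.linftyOpNormedAlgebra
    letI : NormedAlgebra ℚ (Matrix (Fin 2) (Fin 2) ℂ) := Matrix.linftyOpNormedAlgebra
    letI : NormedAlgebra ℚ (Matrix (Fin 2 × Fin 2) (Fin 2 × Fin 2) ℂ) :=
      Matrix.linftyOpNormedAlgebra
    have := NormedSpace.map_exp kronL (LinearMap.continuous_of_finiteDimensional kronL.toLinearMap) B
    simp only [kronL, AlgHom.ofLinearMap] at this
    exact this.symm
  rw [h1, h2, ← Matrix.mul_kronecker_mul]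
  simp

theorem two_qubit_fidelity_factors
    (Q₁ Q₂ : Matrix (Fin 2) (Fin 2) ℂ) (u v : Fin 2 → ℂ)
    (S : Matrix (Fin 2 × Fin 2) (Fin 2 × Fin 2) ℂ)
    (hS : S = Q₁ ⊗ₖ (1 : Matrix (Fin 2) (Fin 2) ℂ)
      + (1 : Matrix (Fin 2) (Fin 2) ℂ) ⊗ₖ Q₂)
    (w : Fin 2 × Fin 2 → ℂ) (hw : w = fun p => u p.1 * v p.2)
    (x : ℝ) :
    ‖star w ⬝ᵥ
        (NormedSpace.exp ((-(Complex.I * (x : ℂ))) • S)).mulVec w‖ ^ 2 =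
      ‖star u ⬝ᵥ
          (NormedSpace.exp ((-(Complex.I * (x : ℂ))) • Q₁)).mulVec u‖ ^ 2 *
        ‖star v ⬝ᵥ
          (NormedSpace.exp ((-(Complex.I * (x : ℂ))) • Q₂)).mulVec v‖ ^ 2 := by
  set c : ℂ := -(Complex.I * (x : ℂ))
  have hsmul : c • S = (c • Q₁) ⊗ₖ (1 : Matrix (Fin 2) (Fin 2) ℂ)
      + (1 : Matrix (Fin 2) (Fin 2) ℂ) ⊗ₖ (c • Q₂) := by
    rw [hS, smul_add, Matrix.smul_kronecker, Matrix.kronecker_smul]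
  have hexp : NormedSpace.exp (c • S)
      = NormedSpace.exp (c • Q₁) ⊗ₖ NormedSpace.exp (c • Q₂) := by
    rw [hsmul, exp_kron_sum]
  rw [hexp]
  have key : star w ⬝ᵥ (NormedSpace.exp (c • Q₁) ⊗ₖ NormedSpace.exp (c • Q₂)).mulVec w
      = (star u ⬝ᵥ (NormedSpace.exp (c • Q₁)).mulVec u)
        * (star v ⬝ᵥ (NormedSpace.exp (c • Q₂)).mulVec v) := by
    subst hw
    simp only [dotProduct, mulVec, Matrix.kroneckerMap_apply, Fintype.sum_prod_type,
      Fin.sum_univ_two, Pi.star_apply, star_mul']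
    ring
  rw [key, norm_mul, mul_pow]
end
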